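/- arXiv:1806.03970 — 3 statements merged into one kernel-verified Lean document; each statement's English description precedes it below -/
import Mathlib

section
/- Every MV-chain C satisfies both of the following: for every x ∈ C, if 0 < x and x < ¬x then x_σ < x; and for every x ∈ C, if ¬x < x and x < 1 then x < x_σ. -/
/-- An MV-algebra: a commutative monoid `(B, ⊕, 0)` with an involution `¬`
satisfying `¬0 ⊕ x = ¬0` and the Łukasiewicz axiom
`¬(¬x ⊕ y) ⊕ y = ¬(¬y ⊕ x) ⊕ x`. -/
class MVAlgebra (B : Type*) where
  oplus : B → B → B
  mvneg : B → B
  zero : B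
  oplus_assoc : ∀ x y z : B, oplus (oplus x y) z = oplus x (oplus y z)
  oplus_comm : ∀ x y : B, oplus x y = oplus y x
  oplus_zero : ∀ x : B, oplus x zero = x
  mvneg_mvneg : ∀ x : B, mvneg (mvneg x) = x
  oplus_mvneg_zero : ∀ x : B, oplus (mvneg zero) x = mvneg zero
  luk : ∀ x y : B, oplus (mvneg (oplus (mvneg x) y)) y = oplus (mvneg (oplus (mvneg y) x)) x

namespace MVAlgebra

variable {B : Type*} [MVAlgebra B]

/-- `1 := ¬0`. -/
def one : B := mvneg zero

/-- `x ⊙ y := ¬(¬x ⊕ ¬y)`. -/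
def odot (x y : B) : B := mvneg (oplus (mvneg x) (mvneg y))

/-- `x ⊖ y := x ⊙ ¬y`. -/
def ominus (x y : B) : B := odot x (mvneg y)

/-- The natural order: `x ≤ y` iff `¬x ⊕ y = 1`. -/
def mvle (x y : B) : Prop := oplus (mvneg x) y = one

/-- Strict natural order. -/
def mvlt (x y : B) : Prop := mvle x y ∧ x ≠ y

/-- The transformation `x ↦ x_σ = (x ⊙ (x ⊕ x)) ⊕ (x ⊙ x)`. -/
def sigmaEl (x : B) : B := oplus (odot x (oplus x x)) (odot x x)

end MVAlgebra

open MVAlgebra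


namespace MVAlgebra

variable {B : Type*} [MVAlgebra B]

lemma neg_one : (mvneg (one : B)) = zero := mvneg_mvneg zero

lemma zero_oplus (x : B) : oplus zero x = x := (oplus_comm zero x).trans (oplus_zero x)

lemma one_oplus (x : B) : oplus one x = one := oplus_mvneg_zero x

lemma oplus_one (x : B) : oplus x one = one := (oplus_comm x one).trans (one_oplus x)

lemma mvle_refl (x : B) : mvle x x := by
  have h := luk (one : B) x
  simp only [neg_one, zero_oplus, oplus_one] at h
  exact h

lemma mvle_antisymm {x y : B} (hxy : mvle x y) (hyx : mvle y x) : x = y := by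
  have h := luk x y
  rw [mvle] at hxy hyx
  rw [hxy, hyx, neg_one, zero_oplus, zero_oplus] at h
  exact h.symm

/-- Cancellation in MV-chains: if `a ⊕ b = a` and `a ≠ 1` then `b = 0`. -/
lemma cancel (htotal : ∀ x y : B, mvle x y ∨ mvle y x)
    {a b : B} (h : oplus a b = a) (ha : a ≠ one) : b = zero := by
  -- first: ¬a ⊕ ¬b = 1
  have hab : oplus (mvneg a) (mvneg b) = one := by
    rcases htotal a (mvneg b) with h1 | h1
    · exact h1
    · exfalso
      rw [mvle, mvneg_mvneg] at h1
      rw [oplus_comm b a, h] at h1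
      exact ha h1
  have hl := luk (mvneg b) a
  rw [mvneg_mvneg, hab, neg_one, zero_oplus, oplus_comm b a, h] at hl
  have : (one : B) = mvneg b := (mvle_refl a).symm.trans hl
  have : mvneg (one : B) = mvneg (mvneg b) := congrArg mvneg this
  rw [neg_one, mvneg_mvneg] at this
  exact this.symm

lemma odot_one (x : B) : odot x one = x := by
  rw [odot, neg_one, oplus_zero, mvneg_mvneg]

end MVAlgebra
/-- every MV-chain `C` satisfies: for every `x`, if `0 < x` and `x < ¬x`
then `x_σ < x`; and if `¬x < x` and `x < 1` then `x < x_σ`. -/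
theorem mvchain_sigma_strict {C : Type*} [MVAlgebra C]
    (htotal : ∀ x y : C, mvle x y ∨ mvle y x) :
    (∀ x : C, mvlt zero x → mvlt x (mvneg x) → mvlt (sigmaEl x) x) ∧
    (∀ x : C, mvlt (mvneg x) x → mvlt x one → mvlt x (sigmaEl x)) := by
  constructor
  · rintro x ⟨h0le, h0ne⟩ ⟨h1le, h1ne⟩
    -- x ⊙ x = 0
    have hxx : odot x x = zero := by
      rw [mvle] at h1le
      rw [odot, h1le, neg_one]
    have hsig : sigmaEl x = odot x (oplus x x) := by
      rw [sigmaEl, hxx, oplus_zero]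
    constructor
    · -- mvle (sigmaEl x) x
      rw [hsig, mvle, odot, mvneg_mvneg, oplus_assoc, oplus_comm (mvneg (oplus x x)) x,
        ← oplus_assoc, mvle_refl x, one_oplus]
    · -- sigmaEl x ≠ x
      intro heq
      rw [hsig] at heq
      have h2 : oplus (mvneg x) (mvneg (oplus x x)) = mvneg x := by
        have := congrArg mvneg heq
        rw [odot, mvneg_mvneg] at this
        exact this
      have hnex : (mvneg x : C) ≠ one := by
        intro h
        apply h0ne
        have := congrArg mvneg h
        rw [mvneg_mvneg, neg_one] at this
        exact this.symm
      have h3 : mvneg (oplus x x) = zero := cancel htotal h2 hnex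
      have h4 : oplus x x = one := by
        have := congrArg mvneg h3
        rw [mvneg_mvneg] at this
        rw [this, one]
      -- mvneg x ≤ x
      have h5 : mvle (mvneg x) x := by rw [mvle, mvneg_mvneg]; exact h4
      exact h1ne (mvle_antisymm h1le h5)
  · rintro x ⟨h0le, h0ne⟩ ⟨h1le, h1ne⟩
    have h2x : oplus x x = one := by
      rw [mvle, mvneg_mvneg] at h0le
      exact h0le
    have hsig : sigmaEl x = oplus x (odot x x) := by
      rw [sigmaEl, h2x, odot_one]
    constructor
    · rw [hsig, mvle, ← oplus_assoc, mvle_refl x, one_oplus]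
    · intro heq
      rw [hsig] at heq
      have h2 : oplus x (odot x x) = x := heq.symm
      have h3 : odot x x = zero := cancel htotal h2 h1ne
      -- x ≤ ¬x
      have h4 : mvle x (mvneg x) := by
        have := congrArg mvneg h3
        rw [odot, mvneg_mvneg] at this
        rw [mvle]
        rw [this, one]
      exact h0ne (mvle_antisymm h4 h0le).symm
end

section
/- For t ∈ [0,1] let n(t) denote the least natural number n such that σ*^[n+1](t) = σ*^[n](t) (such n exists for every t). If s, t ∈ [0,1] satisfy (t < 1/2 implies s ≤ t), (t > 1/2 implies s ≥ t), and (s = 1/2 if and only if t = 1/2), then n(s) ≤ n(t). (This is the pointwise form of the monotonicity property [p] ⊑ [q] ⟹ n(p) ≤ n(q) for the number of centripetal steps.) -/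
/-- The McNaughton function `σ*(x) = min(1, max(0, 3x - 1))`
    `= (x ⊙ (x ⊕ x)) ⊕ (x ⊙ x)` in the standard MV-algebra `[0,1]`. -/
noncomputable def sigmaStar (x : ℝ) : ℝ := min 1 (max 0 (3 * x - 1))

lemma sS_nonneg (x : ℝ) : 0 ≤ sigmaStar x := le_min zero_le_one (le_max_left 0 _)

lemma sS_le_one (x : ℝ) : sigmaStar x ≤ 1 := min_le_left _ _

lemma sS_mono : Monotone sigmaStar := fun a b h =>
  min_le_min le_rfl (max_le_max le_rfl (by linarith))

lemma sS_zero : sigmaStar 0 = 0 := by norm_num [sigmaStar]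

lemma sS_one : sigmaStar 1 = 1 := by norm_num [sigmaStar]

lemma sS_half : sigmaStar (1/2 : ℝ) = 1/2 := by norm_num [sigmaStar]

lemma sS_low (x : ℝ) (hx : x ≤ 1/2) :
    sigmaStar x = 0 ∨ 1/2 - sigmaStar x = 3 * (1/2 - x) := by
  unfold sigmaStar
  rcases le_total (3 * x - 1) 0 with h | h
  · left; rw [max_eq_left h, min_eq_right zero_le_one]
  · right; rw [max_eq_right h, min_eq_right (by linarith)]; ring

lemma sS_high (x : ℝ) (hx : (1:ℝ)/2 ≤ x) :
    sigmaStar x = 1 ∨ sigmaStar x - 1/2 = 3 * (x - 1/2) := by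
  unfold sigmaStar
  rcases le_total 1 (3 * x - 1) with h | h
  · left; rw [max_eq_right (by linarith), min_eq_left h]
  · right; rw [max_eq_right (by linarith), min_eq_right h]; ring

lemma iter_bounds_low (t : ℝ) (h0 : 0 ≤ t) (ht : t < 1/2) (n : ℕ) :
    0 ≤ sigmaStar^[n] t ∧ sigmaStar^[n] t ≤ t := by
  induction n with
  | zero => exact ⟨h0, le_rfl⟩
  | succ n ih =>
    rw [Function.iterate_succ_apply']
    refine ⟨sS_nonneg _, ?_⟩
    rcases sS_low _ (le_trans ih.2 ht.le) with h | h
    · rw [h]; exact h0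
    · linarith [ih.1, ih.2]

lemma iter_bounds_high (t : ℝ) (h1 : t ≤ 1) (ht : 1/2 < t) (n : ℕ) :
    sigmaStar^[n] t ≤ 1 ∧ t ≤ sigmaStar^[n] t := by
  induction n with
  | zero => exact ⟨h1, le_rfl⟩
  | succ n ih =>
    rw [Function.iterate_succ_apply']
    refine ⟨sS_le_one _, ?_⟩
    rcases sS_high _ (le_trans ht.le ih.2) with h | h
    · rw [h]; exact h1
    · linarith [ih.1, ih.2]

lemma claim_low (t : ℝ) (h0 : 0 ≤ t) (ht : t < 1/2) (n : ℕ) :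
    sigmaStar^[n] t = 0 ∨ 3^n * (1/2 - t) ≤ 1/2 - sigmaStar^[n] t := by
  induction n with
  | zero => right; simp
  | succ n ih =>
    rcases ih with h | h
    · left; rw [Function.iterate_succ_apply', h, sS_zero]
    · have hp : (0:ℝ) ≤ 3^n * (1/2 - t) :=
        mul_nonneg (pow_nonneg (by norm_num) n) (by linarith)
      rw [Function.iterate_succ_apply']
      rcases sS_low (sigmaStar^[n] t) (by linarith) with h2 | h2
      · left; exact h2
      · right
        rw [pow_succ]
        nlinarith
    
lemma claim_high (t : ℝ) (h1 : t ≤ 1) (ht : 1/2 < t) (n : ℕ) :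
    sigmaStar^[n] t = 1 ∨ 3^n * (t - 1/2) ≤ sigmaStar^[n] t - 1/2 := by
  induction n with
  | zero => right; simp
  | succ n ih =>
    rcases ih with h | h
    · left; rw [Function.iterate_succ_apply', h, sS_one]
    · have hp : (0:ℝ) ≤ 3^n * (t - 1/2) :=
        mul_nonneg (pow_nonneg (by norm_num) n) (by linarith)
      rw [Function.iterate_succ_apply']
      rcases sS_high (sigmaStar^[n] t) (by linarith) with h2 | h2
      · left; exact h2
      · right
        rw [pow_succ]
        nlinarith

lemma exists_iter_zero (t : ℝ) (h0 : 0 ≤ t) (ht : t < 1/2) :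
    ∃ n, sigmaStar^[n] t = 0 := by
  obtain ⟨N, hN⟩ := pow_unbounded_of_one_lt ((1/2) / (1/2 - t)) (by norm_num : (1:ℝ) < 3)
  refine ⟨N, ?_⟩
  rcases claim_low t h0 ht N with h | h
  · exact h
  · exfalso
    rw [div_lt_iff₀ (by linarith)] at hN
    have := (iter_bounds_low t h0 ht N).1
    nlinarith

lemma exists_iter_one (t : ℝ) (h1 : t ≤ 1) (ht : 1/2 < t) :
    ∃ n, sigmaStar^[n] t = 1 := by
  obtain ⟨N, hN⟩ := pow_unbounded_of_one_lt ((1/2) / (t - 1/2)) (by norm_num : (1:ℝ) < 3)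
  refine ⟨N, ?_⟩
  rcases claim_high t h1 ht N with h | h
  · exact h
  · exfalso
    rw [div_lt_iff₀ (by linarith)] at hN
    have := (iter_bounds_high t h1 ht N).1
    nlinarith

/-- for every `t ∈ [0,1]` a least `n` with `σ*^[n+1](t) = σ*^[n](t)`
exists; and the map `t ↦ n(t)` is monotone for the pointwise `⊑`-type hypotheses:
if `t < 1/2 → s ≤ t`, `t > 1/2 → s ≥ t`, and `s = 1/2 ↔ t = 1/2`, then `n(s) ≤ n(t)`. -/
theorem steps_monotone :
    (∀ t : ℝ, 0 ≤ t → t ≤ 1 → ∃ n : ℕ, sigmaStar^[n + 1] t = sigmaStar^[n] t) ∧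
    (∀ s t : ℝ, 0 ≤ s → s ≤ 1 → 0 ≤ t → t ≤ 1 →
      (t < 1/2 → s ≤ t) → (t > 1/2 → s ≥ t) → (s = 1/2 ↔ t = 1/2) →
      ∀ ns nt : ℕ,
        IsLeast {n : ℕ | sigmaStar^[n + 1] s = sigmaStar^[n] s} ns →
        IsLeast {n : ℕ | sigmaStar^[n + 1] t = sigmaStar^[n] t} nt →
        ns ≤ nt) := by
  constructor
  · intro t h0 h1
    rcases lt_trichotomy t (1/2) with h | h | h
    · obtain ⟨n, hn⟩ := exists_iter_zero t h0 h
      exact ⟨n, by rw [Function.iterate_succ_apply', hn, sS_zero]⟩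
    · exact ⟨0, by simp only [zero_add, Function.iterate_one, Function.iterate_zero, id_eq, h]; exact sS_half⟩
    · obtain ⟨n, hn⟩ := exists_iter_one t h1 h
      exact ⟨n, by rw [Function.iterate_succ_apply', hn, sS_one]⟩
  · intro s t hs0 hs1 ht0 ht1 hlt hgt hiff ns nt hns hnt
    rcases lt_trichotomy t (1/2) with h | h | h
    · have hst : s ≤ t := hlt h
      have hbt := iter_bounds_low t ht0 h nt
      have hfix : sigmaStar (sigmaStar^[nt] t) = sigmaStar^[nt] t := by
        have := hnt.1
        rwa [Set.mem_setOf_eq, Function.iterate_succ_apply'] at this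
      have hv : sigmaStar^[nt] t = 0 := by
        rcases sS_low (sigmaStar^[nt] t) (by linarith [hbt.2]) with hz | he
        · exact hfix.symm.trans hz
        · rw [hfix] at he
          linarith [hbt.2]
      have hsv : sigmaStar^[nt] s = 0 :=
        le_antisymm (hv ▸ sS_mono.iterate nt hst)
          (iter_bounds_low s hs0 (lt_of_le_of_lt hst h) nt).1
      exact hns.2 (by rw [Set.mem_setOf_eq, Function.iterate_succ_apply', hsv, sS_zero])
    · have hs : s = 1/2 := hiff.mpr h
      have : ns ≤ 0 := hns.2 (by
        simp only [Set.mem_setOf_eq, zero_add, Function.iterate_one, Function.iterate_zero,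
          id_eq, hs]
        exact sS_half)
      omega
    · have hst : t ≤ s := hgt h
      have hbt := iter_bounds_high t ht1 h nt
      have hfix : sigmaStar (sigmaStar^[nt] t) = sigmaStar^[nt] t := by
        have := hnt.1
        rwa [Set.mem_setOf_eq, Function.iterate_succ_apply'] at this
      have hv : sigmaStar^[nt] t = 1 := by
        rcases sS_high (sigmaStar^[nt] t) (by linarith [hbt.2]) with hz | he
        · exact hfix.symm.trans hz
        · rw [hfix] at he
          linarith [hbt.2]
      have hsv : sigmaStar^[nt] s = 1 :=
        le_antisymm (iter_bounds_high s hs1 (lt_of_lt_of_le h hst) nt).1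
          (hv ▸ sS_mono.iterate nt hst)
      exact hns.2 (by rw [Set.mem_setOf_eq, Function.iterate_succ_apply', hsv, sS_one])
end

section
/- Let X be a topological space and f : X → ℝ a continuous function with values in [0,1] and with finite range, and suppose f(x₀) = 1/2 for some x₀ ∈ X. Let n be the least natural number with σ*^[n+1] ∘ f = σ*^[n] ∘ f and set h := σ*^[n] ∘ f. Then the two functions x ↦ min(1, 2·h(x)) (i.e., h ⊕ h pointwise) and x ↦ max(0, 2·h(x) − 1) (i.e., h ⊙ h pointwise) are distinct continuous functions with range contained in {0,1}, and each of them satisfies ⊑ f pointwise. -/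
/-- `g ⊑ f` pointwise: for every `x`, `f x < 1 - f x` implies `g x ≤ f x`, and
`f x > 1 - f x` implies `f x ≤ g x`. -/
def ptSqle {X : Type*} (g f : X → ℝ) : Prop :=
  ∀ x : X, (f x < 1 - f x → g x ≤ f x) ∧ (f x > 1 - f x → f x ≤ g x)

lemma sigmaStar_fixed {y : ℝ} (hy : sigmaStar y = y) : y = 0 ∨ y = 1/2 ∨ y = 1 := by
  unfold sigmaStar at hy
  by_cases h1 : 3 * y - 1 ≤ 0
  · left
    rw [max_eq_left h1] at hy
    norm_num at hy
    linarith
  · by_cases h2 : (1:ℝ) ≤ 3 * y - 1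
    · right; right
      rw [max_eq_right (by linarith), min_eq_left h2] at hy
      linarith
    · right; left
      rw [max_eq_right (by linarith), min_eq_right (by linarith)] at hy
      linarith

lemma sigmaStar_lt {x : ℝ} (hx : x < 1/2) : sigmaStar x < 1/2 :=
  lt_of_le_of_lt (min_le_right _ _) (max_lt (by norm_num) (by linarith))

lemma sigmaStar_gt {x : ℝ} (hx : 1/2 < x) : 1/2 < sigmaStar x :=
  lt_min (by norm_num) (lt_max_of_lt_right (by linarith))

lemma sigmaStar_iter_lt {x : ℝ} (hx : x < 1/2) (n : ℕ) : sigmaStar^[n] x < 1/2 := by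
  induction n with
  | zero => simpa using hx
  | succ k ih => rw [Function.iterate_succ_apply']; exact sigmaStar_lt ih

lemma sigmaStar_iter_gt {x : ℝ} (hx : 1/2 < x) (n : ℕ) : 1/2 < sigmaStar^[n] x := by
  induction n with
  | zero => simpa using hx
  | succ k ih => rw [Function.iterate_succ_apply']; exact sigmaStar_gt ih

lemma sigmaStar_iter_half (n : ℕ) : sigmaStar^[n] (1/2 : ℝ) = 1/2 := by
  induction n with
  | zero => simp
  | succ k ih =>
      rw [Function.iterate_succ_apply', ih]
      unfold sigmaStar
      norm_num

lemma sigmaStar_continuous : Continuous sigmaStar :=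
  continuous_const.min ((continuous_const.max (by continuity)))

/-- if the continuous finite-range `[0,1]`-valued function `f` takes the
value `1/2` somewhere, and `h = σ*^[n] ∘ f` with `n` the least natural number such that
`σ*^[n+1] ∘ f = σ*^[n] ∘ f`, then `h ⊕ h = min(1, 2h)` and `h ⊙ h = max(0, 2h - 1)` are
two distinct continuous `{0,1}`-valued functions, each `⊑ f` pointwise. -/
theorem two_central_approximants {X : Type*} [TopologicalSpace X] (f : X → ℝ)
    (hf : Continuous f) (hf01 : ∀ x, 0 ≤ f x ∧ f x ≤ 1) (hfin : (Set.range f).Finite)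
    (x₀ : X) (hx₀ : f x₀ = 1/2)
    (n : ℕ) (hn : IsLeast {m : ℕ | sigmaStar^[m + 1] ∘ f = sigmaStar^[m] ∘ f} n)
    (h : X → ℝ) (hh : h = sigmaStar^[n] ∘ f) :
    (fun x => min 1 (2 * h x)) ≠ (fun x => max 0 (2 * h x - 1)) ∧
    Continuous (fun x => min 1 (2 * h x)) ∧
    Continuous (fun x => max 0 (2 * h x - 1)) ∧
    Set.range (fun x => min 1 (2 * h x)) ⊆ ({0, 1} : Set ℝ) ∧
    Set.range (fun x => max 0 (2 * h x - 1)) ⊆ ({0, 1} : Set ℝ) ∧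
    ptSqle (fun x => min 1 (2 * h x)) f ∧
    ptSqle (fun x => max 0 (2 * h x - 1)) f := by
  -- h is a function of fixed points of σ*
  have hfix : ∀ x, sigmaStar (h x) = h x := by
    intro x
    have := congrFun hn.1 x
    simp only [Function.comp_apply, Function.iterate_succ_apply'] at this
    rw [hh]
    simpa using this
  have htri : ∀ x, h x = 0 ∨ h x = 1/2 ∨ h x = 1 := fun x => sigmaStar_fixed (hfix x)
  have hx0half : h x₀ = 1/2 := by
    rw [hh, Function.comp_apply, hx₀, sigmaStar_iter_half]
  have hlow : ∀ x, f x < 1/2 → h x = 0 := by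
    intro x hx
    have h1 : h x < 1/2 := by rw [hh]; exact sigmaStar_iter_lt hx n
    rcases htri x with h0 | h0 | h0 <;> first | exact h0 | (rw [h0] at h1; linarith)
  have hhigh : ∀ x, 1/2 < f x → h x = 1 := by
    intro x hx
    have h1 : 1/2 < h x := by rw [hh]; exact sigmaStar_iter_gt hx n
    rcases htri x with h0 | h0 | h0 <;> first | exact h0 | (rw [h0] at h1; linarith)
  have hhcont : Continuous h := by
    rw [hh]; exact (sigmaStar_continuous.iterate n).comp hf
  refine ⟨?_, ?_, ?_, ?_, ?_, ?_, ?_⟩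
  · intro hcontra
    have := congrFun hcontra x₀
    rw [hx0half] at this
    norm_num at this
  · exact continuous_const.min (continuous_const.mul hhcont)
  · exact continuous_const.max ((continuous_const.mul hhcont).sub continuous_const)
  · rintro y ⟨x, rfl⟩
    rcases htri x with h0 | h0 | h0 <;> simp only [h0] <;> norm_num
  · rintro y ⟨x, rfl⟩
    rcases htri x with h0 | h0 | h0 <;> simp only [h0] <;> norm_num
  · intro x
    constructor
    · intro hx
      simp only [hlow x (by linarith : f x < 1/2)]
      norm_num
      exact (hf01 x).1
    · intro hx
      simp only [hhigh x (by linarith : 1/2 < f x)]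
      norm_num
      exact (hf01 x).2
  · intro x
    constructor
    · intro hx
      simp only [hlow x (by linarith : f x < 1/2)]
      norm_num
      exact (hf01 x).1
    · intro hx
      simp only [hhigh x (by linarith : 1/2 < f x)]
      norm_num
      exact (hf01 x).2
end
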